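/- In the Setting below with any sketch matrix Ω ∈ ℝ^{n×(k+p)} and any integer q ≥ 1, let P be the orthogonal projection onto the column space of A^{q−1/2}Ω (so Â_q = A^{1/2} P A^{1/2}) and let P' be the orthogonal projection onto the column space of A^{q}Ω. Then ‖f(A) − P' f(A) P'‖_F ≤ ‖f(A) − f(Â_q)‖_F ≤ ‖f(A) − P f(A) P‖_F. -/

import Mathlib

open Matrix MeasureTheory ProbabilityTheory
open scoped ENNReal

namespace FunNystrom

/-- Frobenius norm of a real matrix. -/
noncomputable def frob {m k : Type*} [Fintype m] [Fintype k] (M : Matrix m k ℝ) : ℝ :=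
  Real.sqrt (∑ i, ∑ j, (M i j) ^ 2)

/-- Spectral norm (the ℓ²→ℓ² operator norm) of a real matrix. -/
noncomputable def specNorm {m k : Type*} [Fintype m] [Fintype k] [DecidableEq k]
    (M : Matrix m k ℝ) : ℝ :=
  ‖LinearMap.toContinuousLinearMap (Matrix.toEuclideanLin M)‖

/-- Schatten-`s` norm of a real matrix: the `ℓˢ` norm of its singular values
(the square roots of the eigenvalues of `Mᴴ * M`). -/
noncomputable def schatten {m k : Type*} [Fintype m] [Fintype k] [DecidableEq k]
    (s : ℝ) (M : Matrix m k ℝ) : ℝ :=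
  (∑ i, Real.sqrt ((Matrix.isHermitian_conjTranspose_mul_self M).eigenvalues i) ^ s) ^ s⁻¹

/-- `fB = f(B)`: the matrix function `f` applied to the symmetric matrix `B`, i.e.
`fB = V f(D) Vᵀ` for a spectral decomposition `B = V D Vᵀ` (the continuous
functional calculus, applied entrywise to the diagonal of `D`). -/
def IsMatFun {n : Type*} [Fintype n] [DecidableEq n]
    (f : ℝ → ℝ) (B fB : Matrix n n ℝ) : Prop :=
  ∃ (V : Matrix n n ℝ) (d : n → ℝ),
    V * Vᵀ = 1 ∧ Vᵀ * V = 1 ∧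
    B = V * Matrix.diagonal d * Vᵀ ∧
    fB = V * Matrix.diagonal (fun i => f (d i)) * Vᵀ

/-- `f` is operator monotone on `[0,∞)`: for all `m ≥ 1` and all `m × m` PSD
matrices `B ⪰ C` one has `f(B) ⪰ f(C)`. -/
def OpMonotoneOn (f : ℝ → ℝ) : Prop :=
  ∀ (m : ℕ) (B C fB fC : Matrix (Fin m) (Fin m) ℝ),
    B.PosSemidef → C.PosSemidef → (B - C).PosSemidef →
    IsMatFun f B fB → IsMatFun f C fC → (fB - fC).PosSemidef

/-- `P` is the orthogonal projection onto the column space of `M`: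
the unique symmetric idempotent matrix whose column space equals `range M`. -/
def IsProjOnto {n m : Type*} [Fintype n] [Fintype m] [DecidableEq n]
    (P : Matrix n n ℝ) (M : Matrix n m ℝ) : Prop :=
  Pᵀ = P ∧ P * P = P ∧
  LinearMap.range P.mulVecLin = LinearMap.range M.mulVecLin

/-- `A^r = U Λ^r Uᵀ` for the spectral decomposition `A = U Λ Uᵀ`
(diagonal entries raised to the `r`-th power). -/
noncomputable def apow {n : ℕ} (U : Matrix (Fin n) (Fin n) ℝ) (lam : Fin n → ℝ)
    (r : ℝ) : Matrix (Fin n) (Fin n) ℝ :=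
  U * Matrix.diagonal (fun i => lam i ^ r) * Uᵀ

/-- The index `k + i` in `Fin n`, for `i : Fin (n - k)`. -/
def tailIdx {n k : ℕ} (hkn : k < n) (i : Fin (n - k)) : Fin n :=
  ⟨k + i.1, by have := i.2; omega⟩

instance matMeasurableSpace {m k : Type*} : MeasurableSpace (Matrix m k ℝ) :=
  inferInstanceAs (MeasurableSpace (m → k → ℝ))

/-- The law of an `n × m` random matrix with i.i.d. standard Gaussian `N(0,1)`
entries: the product over all entries of the standard Gaussian measure on `ℝ`. -/
noncomputable def gaussianMatrix (n m : ℕ) : Measure (Matrix (Fin n) (Fin m) ℝ) :=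
  Measure.pi fun _ : Fin n => Measure.pi fun _ : Fin m => gaussianReal 0 1


/-! ### Auxiliary lemmas -/

set_option linter.unusedSectionVars false
set_option maxHeartbeats 1600000

open Polynomial

section Aux

lemma ctt {m k : Type*} (M : Matrix m k ℝ) : Mᴴ = Mᵀ := by
  ext i j; simp [Matrix.conjTranspose_apply]

lemma psd_tmul {m k : Type*} [Fintype m] [Fintype k] (M : Matrix m k ℝ) :
    (Mᵀ * M).PosSemidef := by
  simpa [ctt] using Matrix.posSemidef_conjTranspose_mul_self M

variable {m : Type*} [Fintype m] [DecidableEq m]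

lemma psd_conj {M : Matrix m m ℝ} (hM : M.PosSemidef) (B : Matrix m m ℝ) :
    (B * M * Bᵀ).PosSemidef := by
  simpa [ctt] using hM.mul_mul_conjTranspose_same B

lemma psd_trace_nonneg {M : Matrix m m ℝ} (hM : M.PosSemidef) : 0 ≤ M.trace := by
  rw [Matrix.trace]
  refine Finset.sum_nonneg fun i _ => ?_
  simpa using hM.dotProduct_mulVec_nonneg (Pi.single i 1)

lemma psd_trace_mul_nonneg {M N : Matrix m m ℝ} (hM : M.PosSemidef) (hN : N.PosSemidef) :
    0 ≤ (M * N).trace := by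
  obtain ⟨B, hB⟩ : ∃ B : Matrix m m ℝ, M = Bᴴ * B := by
    open scoped MatrixOrder in exact CStarAlgebra.nonneg_iff_eq_star_mul_self.mp hM.nonneg
  have : (M * N).trace = (B * N * Bᵀ).trace := by
    rw [hB, mul_assoc, Matrix.trace_mul_comm (Bᴴ) (B * N), ctt, mul_assoc]
  rw [this]
  exact psd_trace_nonneg (psd_conj hN B)

lemma frob_sq (M : Matrix m m ℝ) : (∑ i, ∑ j, (M i j) ^ 2) = (Mᵀ * M).trace := by
  rw [Matrix.trace, Finset.sum_comm]
  refine Finset.sum_congr rfl fun j _ => ?_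
  simp [Matrix.mul_apply, Matrix.diag, pow_two]

lemma frob_eq (M : Matrix m m ℝ) : frob M = Real.sqrt ((Mᵀ * M).trace) := by
  rw [frob, frob_sq]

lemma frob_le_frob {M N : Matrix m m ℝ} (h : (Mᵀ * M).trace ≤ (Nᵀ * N).trace) :
    frob M ≤ frob N := by
  rw [frob_eq, frob_eq]; exact Real.sqrt_le_sqrt h

lemma frobSq_nonneg (M : Matrix m m ℝ) : 0 ≤ (Mᵀ * M).trace := by
  rw [← frob_sq]
  exact Finset.sum_nonneg fun i _ => Finset.sum_nonneg fun j _ => sq_nonneg _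

lemma trace_sq_mono {R S : Matrix m m ℝ} (hR : R.PosSemidef) (hRS : (S - R).PosSemidef) :
    (R * R).trace ≤ (S * S).trace := by
  have hS : S.PosSemidef := by simpa using hRS.add hR
  have h1 : 0 ≤ ((S - R) * S).trace := psd_trace_mul_nonneg hRS hS
  have h2 : 0 ≤ (R * (S - R)).trace := psd_trace_mul_nonneg hR hRS
  have e1 : ((S - R) * S).trace = (S*S).trace - (R*S).trace := by
    rw [Matrix.sub_mul, Matrix.trace_sub]
  have e2 : (R * (S - R)).trace = (R*S).trace - (R*R).trace := by
    rw [Matrix.mul_sub, Matrix.trace_sub]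
  linarith

lemma trace_sub_sq {M N : Matrix m m ℝ} (hM : Mᵀ = M) (hN : Nᵀ = N) :
    ((M - N)ᵀ * (M - N)).trace
      = (M * M).trace - 2 * ((M * N).trace) + (N * N).trace := by
  rw [Matrix.transpose_sub, hM, hN, Matrix.sub_mul, Matrix.mul_sub, Matrix.mul_sub,
    Matrix.trace_sub, Matrix.trace_sub, Matrix.trace_sub, Matrix.trace_mul_comm N M]
  ring

lemma conj_pow (V : Matrix m m ℝ) (d : m → ℝ) (hV : V * Vᵀ = 1) (hV' : Vᵀ * V = 1) (k : ℕ) :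
    (V * diagonal d * Vᵀ) ^ k = V * diagonal (fun i => d i ^ k) * Vᵀ := by
  induction k with
  | zero =>
    rw [pow_zero]
    have h0 : (fun i => d i ^ 0) = fun _ : m => (1:ℝ) := by funext i; simp
    rw [h0, Matrix.diagonal_one, mul_one, hV]
  | succ k ih =>
    rw [pow_succ, ih]
    have : V * diagonal (fun i => d i ^ k) * Vᵀ * (V * diagonal d * Vᵀ)
        = V * (diagonal (fun i => d i ^ k) * diagonal d) * Vᵀ := by
      calc V * diagonal (fun i => d i ^ k) * Vᵀ * (V * diagonal d * Vᵀ)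
          = V * diagonal (fun i => d i ^ k) * (Vᵀ * V) * diagonal d * Vᵀ := by
            simp only [mul_assoc]
        _ = V * (diagonal (fun i => d i ^ k) * diagonal d) * Vᵀ := by
            rw [hV']; simp only [mul_one, mul_assoc]
    rw [this, Matrix.diagonal_mul_diagonal]
    have : (fun i => d i ^ k * d i) = fun i => d i ^ (k+1) := by
      funext i; ring
    rw [this]

lemma aeval_conj (V : Matrix m m ℝ) (d : m → ℝ) (hV : V * Vᵀ = 1) (hV' : Vᵀ * V = 1) (p : ℝ[X]) :
    aeval (V * diagonal d * Vᵀ) p = V * diagonal (fun i => p.eval (d i)) * Vᵀ := by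
  induction p using Polynomial.induction_on' with
  | add p q hp hq =>
    rw [map_add, hp, hq]
    have h0 : (fun i => (p + q).eval (d i))
        = fun i => p.eval (d i) + q.eval (d i) := by
      funext i; simp
    rw [h0, ← Matrix.diagonal_add, Matrix.mul_add, Matrix.add_mul]
  | monomial k a =>
    rw [aeval_monomial, conj_pow V d hV hV' k]
    have h1 : (algebraMap ℝ (Matrix m m ℝ)) a = a • (1 : Matrix m m ℝ) := by
      simp [Algebra.algebraMap_eq_smul_one]
    rw [h1, smul_mul_assoc, one_mul]
    have h0 : (fun i => (monomial k a).eval (d i)) = a • (fun i => d i ^ k) := by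
      funext i; simp [Polynomial.eval_monomial]
    rw [h0, Matrix.diagonal_smul, Matrix.mul_smul, Matrix.smul_mul]

lemma isMatFun_unique {f : ℝ → ℝ} {B X Y : Matrix m m ℝ}
    (hX : IsMatFun f B X) (hY : IsMatFun f B Y) : X = Y := by
  obtain ⟨V₁, d₁, hV1, hV1', hB1, hX1⟩ := hX
  obtain ⟨V₂, d₂, hV2, hV2', hB2, hY1⟩ := hY
  set s : Finset ℝ := Finset.image d₁ Finset.univ ∪ Finset.image d₂ Finset.univ with hs
  set p : ℝ[X] := Lagrange.interpolate s id f with hp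
  have hnode : ∀ x ∈ s, p.eval x = f x := fun x hx =>
    Lagrange.eval_interpolate_at_node f (Set.injOn_id _) hx
  have h1 : X = aeval B p := by
    rw [hX1, hB1, aeval_conj V₁ d₁ hV1 hV1' p]
    have h0 : (fun i => f (d₁ i)) = fun i => p.eval (d₁ i) := by
      funext i; rw [hnode (d₁ i) (by simp [hs])]
    rw [h0]
  have h2 : Y = aeval B p := by
    rw [hY1, hB2, aeval_conj V₂ d₂ hV2 hV2' p]
    have h0 : (fun i => f (d₂ i)) = fun i => p.eval (d₂ i) := by
      funext i; rw [hnode (d₂ i) (by simp [hs])]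
    rw [h0]
  rw [h1, h2]

lemma trace_conj (V : Matrix m m ℝ) (d : m → ℝ) (hV' : Vᵀ * V = 1) :
    (V * diagonal d * Vᵀ).trace = ∑ i, d i := by
  rw [Matrix.trace_mul_comm, ← mul_assoc, hV', one_mul, Matrix.trace_diagonal]

lemma conj_mul (V : Matrix m m ℝ) (hV' : Vᵀ * V = 1) (D₁ D₂ : Matrix m m ℝ) :
    (V * D₁ * Vᵀ) * (V * D₂ * Vᵀ) = V * (D₁ * D₂) * Vᵀ := by
  calc (V * D₁ * Vᵀ) * (V * D₂ * Vᵀ) = V * D₁ * (Vᵀ * V) * D₂ * Vᵀ := by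
        simp only [mul_assoc]
    _ = V * (D₁ * D₂) * Vᵀ := by rw [hV']; simp only [mul_one, mul_assoc]

lemma conj_sym (V : Matrix m m ℝ) (d : m → ℝ) : (V * diagonal d * Vᵀ)ᵀ = V * diagonal d * Vᵀ := by
  rw [Matrix.transpose_mul, Matrix.transpose_mul, Matrix.transpose_transpose,
    Matrix.diagonal_transpose, ← mul_assoc]

lemma diag_nonneg {W M : Matrix m m ℝ} {μ : m → ℝ} (hW' : Wᵀ * W = 1)
    (h : M = W * diagonal μ * Wᵀ) (hM : M.PosSemidef) : ∀ i, 0 ≤ μ i := by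
  have hd : Matrix.diagonal μ = Wᵀ * M * W := by
    rw [h]
    calc diagonal μ = (Wᵀ * W) * diagonal μ * (Wᵀ * W) := by rw [hW']; simp
      _ = Wᵀ * (W * diagonal μ * Wᵀ) * W := by simp only [mul_assoc]
  have : (Wᵀ * M * W).PosSemidef := by
    have := psd_conj hM Wᵀ
    rwa [Matrix.transpose_transpose] at this
  rw [← hd] at this
  exact fun i => Matrix.posSemidef_diagonal_iff.mp this i

lemma pow_shift (M N : Matrix m m ℝ) (j : ℕ) :
    (M * N) ^ (j + 1) = M * (N * M) ^ j * N := by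
  induction j with
  | zero => simp
  | succ j ih =>
    rw [pow_succ, ih, pow_succ]
    simp only [mul_assoc]

lemma trace_pow_mul_comm (M N : Matrix m m ℝ) (k : ℕ) (hk : k ≠ 0) :
    ((M * N) ^ k).trace = ((N * M) ^ k).trace := by
  obtain ⟨j, rfl⟩ := Nat.exists_eq_succ_of_ne_zero hk
  rw [pow_shift, Matrix.trace_mul_comm]
  congr 1
  rw [← mul_assoc, ← pow_succ']

lemma sum_shift {S : Matrix m m ℝ} {g : ℝ → ℝ} (hg : g 0 = 0)
    {V₁ V₂ : Matrix m m ℝ} {d₁ d₂ : m → ℝ}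
    (hV1 : V₁ * V₁ᵀ = 1) (hV1' : V₁ᵀ * V₁ = 1) (h1 : S * Sᵀ = V₁ * diagonal d₁ * V₁ᵀ)
    (hV2 : V₂ * V₂ᵀ = 1) (hV2' : V₂ᵀ * V₂ = 1) (h2 : Sᵀ * S = V₂ * diagonal d₂ * V₂ᵀ) :
    ∑ i, g (d₁ i) = ∑ i, g (d₂ i) := by
  classical
  set s : Finset ℝ := insert 0 (Finset.image d₁ Finset.univ ∪ Finset.image d₂ Finset.univ)
    with hs
  set p : ℝ[X] := Lagrange.interpolate s id g with hp
  have hnode : ∀ x ∈ s, p.eval x = g x := fun x hx =>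
    Lagrange.eval_interpolate_at_node g (Set.injOn_id _) hx
  have hp0 : p.coeff 0 = 0 := by
    rw [Polynomial.coeff_zero_eq_eval_zero, hnode 0 (by simp [hs]), hg]
  have key : (aeval (S * Sᵀ) p).trace = (aeval (Sᵀ * S) p).trace := by
    rw [aeval_eq_sum_range, aeval_eq_sum_range]
    rw [Matrix.trace_sum, Matrix.trace_sum]
    refine Finset.sum_congr rfl fun k _ => ?_
    rcases eq_or_ne k 0 with rfl | hk
    · simp [hp0]
    · rw [Matrix.trace_smul, Matrix.trace_smul, trace_pow_mul_comm S Sᵀ k hk]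
  have e1 : (aeval (S * Sᵀ) p).trace = ∑ i, g (d₁ i) := by
    rw [h1, aeval_conj V₁ d₁ hV1 hV1' p, trace_conj V₁ _ hV1']
    refine Finset.sum_congr rfl fun i _ => hnode (d₁ i) (by simp [hs])
  have e2 : (aeval (Sᵀ * S) p).trace = ∑ i, g (d₂ i) := by
    rw [h2, aeval_conj V₂ d₂ hV2 hV2' p, trace_conj V₂ _ hV2']
    refine Finset.sum_congr rfl fun i _ => hnode (d₂ i) (by simp [hs])
  rw [← e1, ← e2, key]

lemma psd2 {a b e : ℝ} (ha : 0 ≤ a) (he : 0 ≤ e) (hdet : b^2 ≤ a*e) :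
    (!![a, b; b, e] : Matrix (Fin 2) (Fin 2) ℝ).PosSemidef := by
  refine Matrix.PosSemidef.of_dotProduct_mulVec_nonneg ?_ ?_
  · ext i j
    fin_cases i <;> fin_cases j <;> simp [Matrix.conjTranspose_apply]
  · intro x
    have hx : (star x) ⬝ᵥ ((!![a, b; b, e] : Matrix (Fin 2) (Fin 2) ℝ).mulVec x)
        = a * (x 0)^2 + 2*b*(x 0)*(x 1) + e*(x 1)^2 := by
      simp [Matrix.mulVec, dotProduct, Fin.sum_univ_two]
      ring
    rw [hx]
    rcases eq_or_lt_of_le ha with h0 | hpos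
    · have hb : b = 0 := by nlinarith [sq_nonneg b]
      rw [hb, ← h0]
      nlinarith [sq_nonneg (x 1)]
    · nlinarith [sq_nonneg (a * x 0 + b * x 1), mul_pos hpos hpos, sq_nonneg (x 1),
        mul_nonneg (mul_nonneg ha he) (sq_nonneg (x 1)), sq_nonneg b]

lemma scalar_mono {f : ℝ → ℝ} (hf : OpMonotoneOn f) {x y : ℝ} (hx : 0 ≤ x) (hxy : x ≤ y) :
    f x ≤ f y := by
  have h := hf 1 (Matrix.diagonal (fun _ => y)) (Matrix.diagonal (fun _ => x))
    (Matrix.diagonal (fun _ => f y)) (Matrix.diagonal (fun _ => f x))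
    (Matrix.posSemidef_diagonal_iff.mpr (fun _ => by linarith))
    (Matrix.posSemidef_diagonal_iff.mpr (fun _ => hx))
    (by
      rw [Matrix.diagonal_sub]
      exact Matrix.posSemidef_diagonal_iff.mpr (fun _ => by linarith))
    ⟨1, fun _ => y, by simp, by simp, by simp, by simp⟩
    ⟨1, fun _ => x, by simp, by simp, by simp, by simp⟩
  rw [Matrix.diagonal_sub] at h
  have := Matrix.posSemidef_diagonal_iff.mp h 0
  linarith

lemma key2x2 {f : ℝ → ℝ} (hf : OpMonotoneOn f) (hf0 : f 0 = 0)
    {s r K σ γ st ct : ℝ}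
    (hs : 0 ≤ s) (hr : 0 ≤ r) (hK : 0 ≤ K)
    (hst : st * st = σ) (hct : ct * ct = γ) (hσγ : σ + γ = 1)
    (hM11 : 0 ≤ K * σ - r) (hdet : r * s ≤ K * (σ * s - r * γ)) :
    f (s + r) * γ ≤ f s := by
  have hσ0 : 0 ≤ σ := hst ▸ mul_self_nonneg st
  have hγ0 : 0 ≤ γ := hct ▸ mul_self_nonneg ct
  set V : Matrix (Fin 2) (Fin 2) ℝ := !![-st, ct; ct, st] with hVdef
  set d : Fin 2 → ℝ := ![K + s, s] with hddef
  set dC : Fin 2 → ℝ := ![s + r, 0] with hdCdef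
  set B : Matrix (Fin 2) (Fin 2) ℝ := V * Matrix.diagonal d * Vᵀ with hBdef
  set C : Matrix (Fin 2) (Fin 2) ℝ := Matrix.diagonal dC with hCdef
  have hVsym : Vᵀ = V := by
    ext i j; fin_cases i <;> fin_cases j <;> simp [hVdef]
  have hV : V * Vᵀ = 1 := by
    rw [hVsym]
    ext i j
    fin_cases i <;> fin_cases j <;>
      simp [hVdef, Matrix.mul_apply, Fin.sum_univ_two, Matrix.one_apply]
    · linear_combination hst + hct + hσγ
    · ring
    · ring
    · linear_combination hct + hst + hσγ
  have hV' : Vᵀ * V = 1 := by rw [hVsym]; rw [hVsym] at hV; exact hV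
  have hd0 : ∀ i, 0 ≤ d i := by
    intro i; fin_cases i <;> simp [hddef] <;> linarith
  have hdC0 : ∀ i, 0 ≤ dC i := by
    intro i; fin_cases i <;> simp [hdCdef] <;> linarith
  have hBpsd : B.PosSemidef := psd_conj (Matrix.posSemidef_diagonal_iff.mpr hd0) V
  have hCpsd : C.PosSemidef := Matrix.posSemidef_diagonal_iff.mpr hdC0
  have hdiagd : Matrix.diagonal d = !![K + s, 0; 0, s] := by
    ext i j
    fin_cases i <;> fin_cases j <;> simp [hddef, Matrix.diagonal]
  have hdiagfd : Matrix.diagonal (fun i => f (d i)) = !![f (K + s), 0; 0, f s] := by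
    ext i j
    fin_cases i <;> fin_cases j <;> simp [hddef, Matrix.diagonal]
  have hCexp : C = !![s + r, 0; 0, 0] := by
    ext i j
    fin_cases i <;> fin_cases j <;> simp [hCdef, hdCdef, Matrix.diagonal]
  have hdiagfC : Matrix.diagonal (fun i => f (dC i)) = !![f (s + r), 0; 0, f 0] := by
    ext i j
    fin_cases i <;> fin_cases j <;> simp [hdCdef, Matrix.diagonal]
  have hBexp : B = !![(-st)*((K+s)*(-st)) + ct*(s*ct), (-st)*((K+s)*ct) + ct*(s*st);
      ct*((K+s)*(-st)) + st*(s*ct), ct*((K+s)*ct) + st*(s*st)] := by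
    rw [hBdef, hVsym, hdiagd, hVdef, Matrix.mul_fin_two, Matrix.mul_fin_two]
    congr 1 <;> ring_nf
  have hBC_eq : B - C = !![K*σ - r, -(K*(st*ct)); -(K*(st*ct)), K*γ + s] := by
    rw [hBexp, hCexp]
    ext i j
    fin_cases i <;> fin_cases j <;> simp [Matrix.sub_apply]
    · linear_combination (K+s)*hst + s*hct + s*hσγ
    · ring
    · ring
    · linear_combination (K+s)*hct + s*hst + s*hσγ
  have hdet2 : (-(K*(st*ct)))^2 ≤ (K*σ - r) * (K*γ + s) := by
    have hb : (-(K*(st*ct)))^2 = K^2*(σ*γ) := by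
      linear_combination (K^2*(ct*ct))*hst + (K^2*σ)*hct
    have key : (K*σ - r)*(K*γ + s) - (-(K*(st*ct)))^2 = K*(σ*s - r*γ) - r*s := by
      linear_combination -hb
    linarith
  have hBCpsd : (B - C).PosSemidef := by
    rw [hBC_eq]
    exact psd2 hM11 (by nlinarith [mul_nonneg hK hγ0]) hdet2
  have hmat := hf 2 B C
    (V * Matrix.diagonal (fun i => f (d i)) * Vᵀ)
    (Matrix.diagonal (fun i => f (dC i)))
    hBpsd hCpsd hBCpsd
    ⟨V, d, hV, hV', rfl, rfl⟩
    ⟨1, dC, by simp, by simp, by simp [hCdef], by simp⟩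
  have hq := hmat.dotProduct_mulVec_nonneg (![ct, st])
  have hfBexp : V * Matrix.diagonal (fun i => f (d i)) * Vᵀ
      = !![(-st)*(f (K+s)*(-st)) + ct*(f s*ct), (-st)*(f (K+s)*ct) + ct*(f s*st);
      ct*(f (K+s)*(-st)) + st*(f s*ct), ct*(f (K+s)*ct) + st*(f s*st)] := by
    rw [hVsym, hdiagfd, hVdef, Matrix.mul_fin_two, Matrix.mul_fin_two]
    congr 1 <;> ring_nf
  have hval : (star ![ct, st]) ⬝ᵥ ((V * Matrix.diagonal (fun i => f (d i)) * Vᵀ -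
      Matrix.diagonal (fun i => f (dC i))).mulVec ![ct, st])
      = f s * ((ct*ct + st*st))^2 - f (s + r) * (ct*ct) - f 0 * (st*st) := by
    rw [hfBexp, hdiagfC]
    simp [Matrix.mulVec, dotProduct, Fin.sum_univ_two, Matrix.sub_apply]
    ring
  rw [hval] at hq
  rw [hst, hct, hf0] at hq
  have hsum : γ + σ = 1 := by linarith
  have hsq : (γ + σ)^2 = 1 := by rw [hsum]; norm_num
  rw [hsq] at hq
  linarith

lemma right_cont {f : ℝ → ℝ} (hf : OpMonotoneOn f) (hf0 : f 0 = 0)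
    (hfpos : ∀ x : ℝ, 0 ≤ x → 0 ≤ f x) {s c : ℝ} (hs : 0 < s) (hc : 0 < c) :
    ∃ y, s < y ∧ f y < f s + c := by
  by_contra hcon
  push_neg at hcon
  have hfs : 0 ≤ f s := hfpos s hs.le
  have hfsc : 0 < f s + c := by linarith
  set σ : ℝ := c / (2*(f s + c)) with hσdef
  have hσpos : 0 < σ := div_pos hc (by linarith)
  have hσhalf : σ ≤ 1/2 := by
    rw [hσdef, div_le_iff₀ (by linarith)]
    linarith
  set γ : ℝ := 1 - σ with hγdef
  have hγpos : 0 < γ := by simp only [hγdef]; linarith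
  have hγle : γ ≤ 1 := by simp only [hγdef]; linarith
  set r : ℝ := σ * s / 2 with hrdef
  have hr : 0 < r := by positivity
  set D : ℝ := σ * s - r * γ with hDdef
  have hD : 0 < D := by
    have h1 : r * γ ≤ r := by nlinarith
    have h2 : r < σ * s := by rw [hrdef]; nlinarith
    simp only [hDdef]; linarith
  set K : ℝ := (r+1)/σ + (r*s)/D with hKdef
  have hK1 : r + 1 ≤ K * σ := by
    rw [hKdef, add_mul, div_mul_cancel₀ _ (ne_of_gt hσpos)]
    have : 0 ≤ (r*s)/D * σ := by positivity
    linarith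
  have hK2 : r * s ≤ K * D := by
    rw [hKdef, add_mul, div_mul_cancel₀ _ (ne_of_gt hD)]
    have : 0 ≤ (r+1)/σ * D := by positivity
    linarith
  have hK : 0 ≤ K := by
    rw [hKdef]; positivity
  have hkey := key2x2 hf hf0 hs.le hr.le hK
    (Real.mul_self_sqrt hσpos.le) (Real.mul_self_sqrt hγpos.le)
    (by simp only [hγdef]; ring)
    (by linarith) (by rw [← hDdef]; linarith)
  have hmono : f s + c ≤ f (s + r) := hcon (s + r) (by linarith)
  have hσc : (f s + c) * σ = c / 2 := by
    rw [hσdef]; field_simp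
  have hmul : (f s + c) * γ ≤ f (s + r) * γ := mul_le_mul_of_nonneg_right hmono hγpos.le
  have hexp : (f s + c) * γ = (f s + c) - c/2 := by
    linear_combination (f s + c) * hγdef - hσc
  clear_value σ γ r D K
  linarith

lemma real_spectral {M : Matrix m m ℝ} (hM : Mᵀ = M) :
    ∃ (W : Matrix m m ℝ) (μ : m → ℝ), W * Wᵀ = 1 ∧ Wᵀ * W = 1 ∧
      M = W * Matrix.diagonal μ * Wᵀ := by
  have hH : M.IsHermitian := by rw [Matrix.IsHermitian, ctt, hM]
  have h1 : (hH.eigenvectorUnitary : Matrix m m ℝ) * star (hH.eigenvectorUnitary : Matrix m m ℝ) = 1 :=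
    (Matrix.mem_unitaryGroup_iff).mp hH.eigenvectorUnitary.2
  have h2 : star (hH.eigenvectorUnitary : Matrix m m ℝ) * (hH.eigenvectorUnitary : Matrix m m ℝ) = 1 :=
    (Matrix.mem_unitaryGroup_iff').mp hH.eigenvectorUnitary.2
  have hstar : star (hH.eigenvectorUnitary : Matrix m m ℝ)
      = (hH.eigenvectorUnitary : Matrix m m ℝ)ᵀ := by
    rw [Matrix.star_eq_conjTranspose, ctt]
  refine ⟨(hH.eigenvectorUnitary : Matrix m m ℝ), hH.eigenvalues, ?_, ?_, ?_⟩
  · rw [← hstar]; exact h1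
  · rw [← hstar]; exact h2
  · have h3 := hH.spectral_theorem
    rw [Unitary.conjStarAlgAut_apply, hstar] at h3
    have h4 : RCLike.ofReal ∘ hH.eigenvalues = hH.eigenvalues := by
      funext i; simp [RCLike.ofReal_real_eq_id]
    rw [h4] at h3
    exact h3

end Aux

section SubmatrixHelpers
variable {m' n' : Type*} [Fintype m'] [DecidableEq m'] [Fintype n'] [DecidableEq n']

lemma diagonal_submatrix (e : m' ≃ n') (d : n' → ℝ) :
    (Matrix.diagonal d).submatrix e e = Matrix.diagonal (d ∘ e) := by
  ext i j
  by_cases h : i = j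
  · subst h; simp
  · have : (e i : n') ≠ e j := fun hc => h (e.injective hc)
    simp [Matrix.diagonal_apply_ne _ this, Matrix.diagonal_apply_ne _ h]

lemma isMatFun_submatrix (e : m' ≃ n') {f : ℝ → ℝ} {B fB : Matrix n' n' ℝ}
    (h : IsMatFun f B fB) : IsMatFun f (B.submatrix e e) (fB.submatrix e e) := by
  obtain ⟨V, d, hV, hV', hB, hfB⟩ := h
  refine ⟨V.submatrix e e, d ∘ e, ?_, ?_, ?_, ?_⟩
  · rw [Matrix.transpose_submatrix, Matrix.submatrix_mul_equiv, hV,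
      Matrix.submatrix_one_equiv]
  · rw [Matrix.transpose_submatrix, Matrix.submatrix_mul_equiv, hV',
      Matrix.submatrix_one_equiv]
  · rw [hB, ← diagonal_submatrix e d, Matrix.transpose_submatrix,
      Matrix.submatrix_mul_equiv, Matrix.submatrix_mul_equiv]
  · rw [hfB, Matrix.transpose_submatrix]
    have : (fun i => f ((d ∘ e) i)) = (fun i => f (d i)) ∘ e := rfl
    rw [this, ← diagonal_submatrix e, Matrix.submatrix_mul_equiv, Matrix.submatrix_mul_equiv]

lemma submatrix_sub' {l : Type*} (A B : Matrix m' m' ℝ) (e : l → m') :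
    (A - B).submatrix e e = A.submatrix e e - B.submatrix e e := rfl

end SubmatrixHelpers

section blocks
variable {a b : Type*} [Fintype a] [DecidableEq a] [Fintype b] [DecidableEq b]

lemma fromBlocks_sub (A A' : Matrix a a ℝ) (B B' : Matrix a b ℝ)
    (C C' : Matrix b a ℝ) (D D' : Matrix b b ℝ) :
    Matrix.fromBlocks A B C D - Matrix.fromBlocks A' B' C' D'
      = Matrix.fromBlocks (A - A') (B - B') (C - C') (D - D') := by
  ext i j
  rcases i with i | i <;> rcases j with j | j <;> simp [Matrix.fromBlocks]

lemma psd_topleft {M₁ : Matrix a a ℝ} {M₂ : Matrix a b ℝ} {M₃ : Matrix b a ℝ}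
    {M₄ : Matrix b b ℝ} (h : (Matrix.fromBlocks M₁ M₂ M₃ M₄).PosSemidef) :
    M₁.PosSemidef := by
  refine Matrix.PosSemidef.of_dotProduct_mulVec_nonneg ?_ ?_
  · ext i j
    have := congr_fun (congr_fun h.1 (Sum.inl i)) (Sum.inl j)
    simpa [Matrix.conjTranspose_apply, Matrix.fromBlocks] using this
  · intro x
    have := h.dotProduct_mulVec_nonneg (Sum.elim x 0)
    rw [Matrix.fromBlocks_mulVec] at this
    simpa [sumElim_dotProduct_sumElim, Matrix.mulVec_zero] using this

end blocks

/-- The dilation inequality: P f(A) P ⪯ f((1+t) P A P). -/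
lemma dilation {n : ℕ} {f : ℝ → ℝ} (hf : OpMonotoneOn f) (hf0 : f 0 = 0)
    {A Z P F W X : Matrix (Fin n) (Fin n) ℝ} {μ : Fin n → ℝ}
    (hZ : Zᵀ = Z) (hA : A = Z * Z)
    (hP : Pᵀ = P) (hPP : P * P = P)
    (hFA : IsMatFun f A F)
    (hX : X = P * A * P)
    (hW : W * Wᵀ = 1) (hW' : Wᵀ * W = 1) (hXW : X = W * diagonal μ * Wᵀ)
    {t : ℝ} (ht : 0 < t) :
    (W * diagonal (fun i => f ((1+t) * μ i)) * Wᵀ - P * F * P).PosSemidef := by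
  classical
  obtain ⟨VA, dA, hVA, hVA', hAdec, hFdec⟩ := hFA
  set Q : Matrix (Fin n) (Fin n) ℝ := 1 - P with hQdef
  have hQ : Qᵀ = Q := by rw [hQdef, Matrix.transpose_sub, Matrix.transpose_one, hP]
  have hPQ : P * Q = 0 := by rw [hQdef, Matrix.mul_sub, hPP, mul_one, sub_self]
  have hQP : Q * P = 0 := by rw [hQdef, Matrix.sub_mul, hPP, one_mul, sub_self]
  have hQQ : Q * Q = Q := by rw [hQdef, Matrix.mul_sub, mul_one, hQP, sub_zero]
  have hPaQ : P + Q = 1 := by rw [hQdef]; exact add_sub_cancel P 1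
  have hQaP : Q + P = 1 := by rw [add_comm]; exact hPaQ
  have hAt : Aᵀ = A := by rw [hA, Matrix.transpose_mul, hZ]
  set Y : Matrix (Fin n) (Fin n) ℝ := Q * A * Q with hYdef
  have hYsym : Yᵀ = Y := by
    rw [hYdef, Matrix.transpose_mul, Matrix.transpose_mul, hQ, hAt, ← mul_assoc]
  obtain ⟨W₂, ν, hW₂, hW₂', hYW⟩ := real_spectral hYsym
  set U₂ : Matrix (Fin n ⊕ Fin n) (Fin n ⊕ Fin n) ℝ := Matrix.fromBlocks P Q Q P with hU₂def
  have hU₂sym : U₂ᵀ = U₂ := by rw [hU₂def, Matrix.fromBlocks_transpose, hP, hQ]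
  have hU₂U₂ : U₂ * U₂ = 1 := by
    rw [hU₂def, Matrix.fromBlocks_multiply, hPP, hQQ, hPQ, hQP, ← Matrix.fromBlocks_one]
    rw [hPaQ, hQaP]
    congr 1 <;> simp
  set Atil : Matrix (Fin n ⊕ Fin n) (Fin n ⊕ Fin n) ℝ :=
    Matrix.fromBlocks A 0 0 0 with hAtildef
  set C : Matrix (Fin n ⊕ Fin n) (Fin n ⊕ Fin n) ℝ := U₂ * Atil * U₂ with hCdef
  set B : Matrix (Fin n ⊕ Fin n) (Fin n ⊕ Fin n) ℝ :=
    Matrix.fromBlocks ((1+t) • X) 0 0 ((1+t⁻¹) • Y) with hBdef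
  have hconj : ∀ M : Matrix (Fin n) (Fin n) ℝ,
      U₂ * Matrix.fromBlocks M 0 0 0 * U₂
        = Matrix.fromBlocks (P*M*P) (P*M*Q) (Q*M*P) (Q*M*Q) := by
    intro M
    rw [hU₂def, Matrix.fromBlocks_multiply, Matrix.fromBlocks_multiply]
    simp only [Matrix.mul_zero, Matrix.zero_mul, add_zero, zero_add]
  have hCblocks : C = Matrix.fromBlocks (P*A*P) (P*A*Q) (Q*A*P) (Q*A*Q) := by
    rw [hCdef, hAtildef, hconj]
  have hfact : ∀ R S : Matrix (Fin n) (Fin n) ℝ, Rᵀ = R → Sᵀ = S →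
      (Z*R)ᵀ * (Z*S) = R*A*S := by
    intro R S hR hS
    rw [Matrix.transpose_mul, hZ, hR, hA]
    simp only [mul_assoc]
  have hCpsd : C.PosSemidef := by
    have hG : (Matrix.fromBlocks Z 0 0 0 : Matrix (Fin n ⊕ Fin n) (Fin n ⊕ Fin n) ℝ)ᵀ
        * Matrix.fromBlocks Z 0 0 0 = Atil := by
      rw [Matrix.fromBlocks_transpose, Matrix.fromBlocks_multiply, hAtildef]
      simp only [Matrix.mul_zero, Matrix.zero_mul, add_zero, zero_add, Matrix.transpose_zero]
      rw [hZ, ← hA]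
    have key : C = ((Matrix.fromBlocks Z 0 0 0 : Matrix (Fin n ⊕ Fin n) (Fin n ⊕ Fin n) ℝ) * U₂)ᵀ
        * ((Matrix.fromBlocks Z 0 0 0 : Matrix (Fin n ⊕ Fin n) (Fin n ⊕ Fin n) ℝ) * U₂) := by
      rw [Matrix.transpose_mul, hU₂sym,
        mul_assoc U₂,
        ← mul_assoc (Matrix.fromBlocks Z 0 0 0 : Matrix (Fin n ⊕ Fin n) (Fin n ⊕ Fin n) ℝ)ᵀ
          (Matrix.fromBlocks Z 0 0 0) U₂,
        hG, hCdef]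
      simp only [mul_assoc]
    rw [key]; exact psd_tmul _
  have hsq : ∀ (c : ℝ) (M N : Matrix (Fin n) (Fin n) ℝ), 0 ≤ c →
      (Real.sqrt c • M)ᵀ * (Real.sqrt c • N) = c • (Mᵀ * N) := by
    intro c M N hc
    rw [Matrix.transpose_smul, Matrix.smul_mul, Matrix.mul_smul, smul_smul,
      Real.mul_self_sqrt hc]
  have hXsym : Xᵀ = X := by
    rw [hX, Matrix.transpose_mul, Matrix.transpose_mul, hP, hAt, ← mul_assoc]
  have h1t : (0:ℝ) ≤ 1 + t := by linarith
  have htinv : (0:ℝ) < t⁻¹ := inv_pos.mpr ht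
  have h1t' : (0:ℝ) ≤ 1 + t⁻¹ := by linarith
  have hBpsd : B.PosSemidef := by
    have e11 : (Real.sqrt (1+t) • (Z*P))ᵀ * (Real.sqrt (1+t) • (Z*P)) = (1+t) • X := by
      rw [hsq _ _ _ h1t, hfact P P hP hP, ← hX]
    have e22 : (Real.sqrt (1+t⁻¹) • (Z*Q))ᵀ * (Real.sqrt (1+t⁻¹) • (Z*Q)) = (1+t⁻¹) • Y := by
      rw [hsq _ _ _ h1t', hfact Q Q hQ hQ, ← hYdef]
    have key : B = (Matrix.fromBlocks (Real.sqrt (1+t) • (Z*P)) 0 0 (Real.sqrt (1+t⁻¹) • (Z*Q)))ᵀ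
        * (Matrix.fromBlocks (Real.sqrt (1+t) • (Z*P)) 0 0 (Real.sqrt (1+t⁻¹) • (Z*Q))) := by
      rw [Matrix.fromBlocks_transpose, Matrix.fromBlocks_multiply]
      simp only [Matrix.mul_zero, Matrix.zero_mul, add_zero, zero_add, Matrix.transpose_zero]
      rw [e11, e22, hBdef]
    rw [key]; exact psd_tmul _
  have hst0 : Real.sqrt t ≠ 0 := ne_of_gt (Real.sqrt_pos.mpr ht)
  have hBCpsd : (B - C).PosSemidef := by
    have e11 : (Real.sqrt t • (Z*P))ᵀ * (Real.sqrt t • (Z*P)) = (1+t) • X - P*A*P := by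
      rw [hsq _ _ _ ht.le, hfact P P hP hP, ← hX, add_smul, one_smul, add_sub_cancel_left]
    have e12 : (Real.sqrt t • (Z*P))ᵀ * (-((Real.sqrt t)⁻¹ • (Z*Q))) = 0 - P*A*Q := by
      rw [Matrix.mul_neg, Matrix.transpose_smul, Matrix.smul_mul, Matrix.mul_smul,
        smul_smul, mul_inv_cancel₀ hst0, one_smul, hfact P Q hP hQ, zero_sub]
    have e21 : (-((Real.sqrt t)⁻¹ • (Z*Q)))ᵀ * (Real.sqrt t • (Z*P)) = 0 - Q*A*P := by
      rw [Matrix.transpose_neg, Matrix.transpose_smul, Matrix.neg_mul, Matrix.smul_mul,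
        Matrix.mul_smul, smul_smul, inv_mul_cancel₀ hst0, one_smul, hfact Q P hQ hP, zero_sub]
    have e22 : (-((Real.sqrt t)⁻¹ • (Z*Q)))ᵀ * (-((Real.sqrt t)⁻¹ • (Z*Q)))
        = (1+t⁻¹) • Y - Q*A*Q := by
      rw [Matrix.transpose_neg, Matrix.transpose_smul, Matrix.neg_mul, Matrix.mul_neg,
        neg_neg, Matrix.smul_mul, Matrix.mul_smul, smul_smul,
        ← Real.sqrt_inv, Real.mul_self_sqrt (inv_nonneg.mpr ht.le), hfact Q Q hQ hQ, ← hYdef,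
        add_smul, one_smul, add_sub_cancel_left]
    have key : B - C
        = (Matrix.fromBlocks (Real.sqrt t • (Z*P)) (-((Real.sqrt t)⁻¹ • (Z*Q))) 0 0)ᵀ
        * (Matrix.fromBlocks (Real.sqrt t • (Z*P)) (-((Real.sqrt t)⁻¹ • (Z*Q))) 0 0) := by
      rw [Matrix.fromBlocks_transpose, Matrix.fromBlocks_multiply]
      simp only [Matrix.mul_zero, Matrix.zero_mul, add_zero, zero_add, Matrix.transpose_zero]
      rw [e11, e12, e21, e22, hBdef, hCblocks, fromBlocks_sub]
    rw [key]; exact psd_tmul _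
  -- function witnesses
  set GT : Matrix (Fin n) (Fin n) ℝ := W * diagonal (fun i => f ((1+t) * μ i)) * Wᵀ with hGTdef
  set GT₂ : Matrix (Fin n) (Fin n) ℝ := W₂ * diagonal (fun i => f ((1+t⁻¹) * ν i)) * W₂ᵀ with hGT₂def
  set fB : Matrix (Fin n ⊕ Fin n) (Fin n ⊕ Fin n) ℝ := Matrix.fromBlocks GT 0 0 GT₂ with hfBdef
  set fC : Matrix (Fin n ⊕ Fin n) (Fin n ⊕ Fin n) ℝ :=
    Matrix.fromBlocks (P*F*P) (P*F*Q) (Q*F*P) (Q*F*Q) with hfCdef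
  set VB : Matrix (Fin n ⊕ Fin n) (Fin n ⊕ Fin n) ℝ := Matrix.fromBlocks W 0 0 W₂ with hVBdef
  set dB : (Fin n ⊕ Fin n) → ℝ :=
    Sum.elim (fun i => (1+t) * μ i) (fun i => (1+t⁻¹) * ν i) with hdBdef
  have hVBmul : ∀ D₁ D₂ : Matrix (Fin n) (Fin n) ℝ,
      VB * Matrix.fromBlocks D₁ 0 0 D₂ * VBᵀ
        = Matrix.fromBlocks (W * D₁ * Wᵀ) 0 0 (W₂ * D₂ * W₂ᵀ) := by
    intro D₁ D₂
    rw [hVBdef, Matrix.fromBlocks_transpose, Matrix.fromBlocks_multiply,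
      Matrix.fromBlocks_multiply]
    simp only [Matrix.mul_zero, Matrix.zero_mul, add_zero, zero_add, Matrix.transpose_zero]
  have hVBorth : VB * VBᵀ = 1 := by
    rw [hVBdef, Matrix.fromBlocks_transpose, Matrix.fromBlocks_multiply,
      ← Matrix.fromBlocks_one]
    simp only [Matrix.mul_zero, Matrix.zero_mul, add_zero, zero_add, Matrix.transpose_zero]
    rw [hW, hW₂]
  have hVBorth' : VBᵀ * VB = 1 := by
    rw [hVBdef, Matrix.fromBlocks_transpose, Matrix.fromBlocks_multiply,
      ← Matrix.fromBlocks_one]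
    simp only [Matrix.mul_zero, Matrix.zero_mul, add_zero, zero_add, Matrix.transpose_zero]
    rw [hW', hW₂']
  have hsmuldiag : ∀ (c : ℝ) (g : Fin n → ℝ),
      Matrix.diagonal (fun i => c * g i) = c • Matrix.diagonal g := by
    intro c g
    rw [← Matrix.diagonal_smul]
    congr 1
  have hBfun : IsMatFun f B fB := by
    refine ⟨VB, dB, hVBorth, hVBorth', ?_, ?_⟩
    · rw [hdBdef, ← Matrix.fromBlocks_diagonal, hVBmul, hBdef]
      rw [hsmuldiag (1+t) μ, hsmuldiag (1+t⁻¹) ν, Matrix.mul_smul, Matrix.smul_mul, ← hXW,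
        Matrix.mul_smul, Matrix.smul_mul, ← hYW]
    · have h0 : (fun i => f (dB i))
          = Sum.elim (fun i => f ((1+t) * μ i)) (fun i => f ((1+t⁻¹) * ν i)) := by
        funext i; cases i <;> rfl
      rw [h0, ← Matrix.fromBlocks_diagonal, hVBmul, hfBdef, hGTdef, hGT₂def]
  set VC : Matrix (Fin n ⊕ Fin n) (Fin n ⊕ Fin n) ℝ :=
    U₂ * Matrix.fromBlocks VA 0 0 1 with hVCdef
  set dC : (Fin n ⊕ Fin n) → ℝ := Sum.elim dA (fun _ => (0:ℝ)) with hdCdef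
  have hEorth : (Matrix.fromBlocks VA 0 0 1 : Matrix (Fin n ⊕ Fin n) (Fin n ⊕ Fin n) ℝ)
      * (Matrix.fromBlocks VA 0 0 1)ᵀ = 1 := by
    rw [Matrix.fromBlocks_transpose, Matrix.fromBlocks_multiply, ← Matrix.fromBlocks_one]
    simp only [Matrix.mul_zero, Matrix.zero_mul, add_zero, zero_add, Matrix.transpose_zero,
      Matrix.transpose_one, Matrix.mul_one]
    rw [hVA]
  have hEorth' : (Matrix.fromBlocks VA 0 0 1 : Matrix (Fin n ⊕ Fin n) (Fin n ⊕ Fin n) ℝ)ᵀ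
      * (Matrix.fromBlocks VA 0 0 1) = 1 := by
    rw [Matrix.fromBlocks_transpose, Matrix.fromBlocks_multiply, ← Matrix.fromBlocks_one]
    simp only [Matrix.mul_zero, Matrix.zero_mul, add_zero, zero_add, Matrix.transpose_zero,
      Matrix.transpose_one, Matrix.mul_one]
    rw [hVA']
  have hVCorth : VC * VCᵀ = 1 := by
    rw [hVCdef, Matrix.transpose_mul, hU₂sym, mul_assoc,
      ← mul_assoc (Matrix.fromBlocks VA 0 0 1), hEorth, one_mul, hU₂U₂]
  have hVCorth' : VCᵀ * VC = 1 := by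
    rw [hVCdef, Matrix.transpose_mul, hU₂sym, mul_assoc, ← mul_assoc U₂, hU₂U₂, one_mul,
      hEorth']
  have hEmul : ∀ D : Matrix (Fin n) (Fin n) ℝ,
      (Matrix.fromBlocks VA 0 0 1 : Matrix (Fin n ⊕ Fin n) (Fin n ⊕ Fin n) ℝ)
        * Matrix.fromBlocks D 0 0 0 * (Matrix.fromBlocks VA 0 0 1)ᵀ
        = Matrix.fromBlocks (VA * D * VAᵀ) 0 0 0 := by
    intro D
    rw [Matrix.fromBlocks_transpose, Matrix.fromBlocks_multiply, Matrix.fromBlocks_multiply]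
    simp only [Matrix.mul_zero, Matrix.zero_mul, add_zero, zero_add, Matrix.transpose_zero,
      Matrix.transpose_one, Matrix.mul_one, Matrix.one_mul]
  have hCfun : IsMatFun f C fC := by
    refine ⟨VC, dC, hVCorth, hVCorth', ?_, ?_⟩
    · have hd : Matrix.diagonal dC
          = Matrix.fromBlocks (Matrix.diagonal dA) 0 0 0 := by
        rw [hdCdef, ← Matrix.fromBlocks_diagonal, Matrix.diagonal_zero]
      have hmid : (Matrix.fromBlocks VA 0 0 1 : Matrix (Fin n ⊕ Fin n) (Fin n ⊕ Fin n) ℝ)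
          * Matrix.fromBlocks (Matrix.diagonal dA) 0 0 0 * (Matrix.fromBlocks VA 0 0 1)ᵀ
          = Atil := by
        rw [hEmul, ← hAdec, hAtildef]
      rw [hCdef, hd, hVCdef, Matrix.transpose_mul, hU₂sym, ← hmid]
      simp only [mul_assoc]
    · have hfd : (fun i => f (dC i))
          = Sum.elim (fun i => f (dA i)) (fun _ => (0:ℝ)) := by
        funext i; cases i
        · rfl
        · simp [hdCdef, hf0]
      have hd : Matrix.diagonal (fun i => f (dC i))
          = Matrix.fromBlocks (Matrix.diagonal (fun i => f (dA i))) 0 0 0 := by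
        rw [hfd, ← Matrix.fromBlocks_diagonal, Matrix.diagonal_zero]
      have hmid : (Matrix.fromBlocks VA 0 0 1 : Matrix (Fin n ⊕ Fin n) (Fin n ⊕ Fin n) ℝ)
          * Matrix.fromBlocks (Matrix.diagonal (fun i => f (dA i))) 0 0 0
          * (Matrix.fromBlocks VA 0 0 1)ᵀ
          = Matrix.fromBlocks F 0 0 0 := by
        rw [hEmul, ← hFdec]
      have h1 : fC = U₂ * Matrix.fromBlocks F 0 0 0 * U₂ := by
        rw [hfCdef, hconj]
      rw [h1, hd, hVCdef, Matrix.transpose_mul, hU₂sym, ← hmid]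
      simp only [mul_assoc]
  -- apply operator monotonicity in dimension n + n
  have hmain := hf (n + n)
    (B.submatrix finSumFinEquiv.symm finSumFinEquiv.symm)
    (C.submatrix finSumFinEquiv.symm finSumFinEquiv.symm)
    (fB.submatrix finSumFinEquiv.symm finSumFinEquiv.symm)
    (fC.submatrix finSumFinEquiv.symm finSumFinEquiv.symm)
    ((Matrix.posSemidef_submatrix_equiv finSumFinEquiv.symm).mpr hBpsd)
    ((Matrix.posSemidef_submatrix_equiv finSumFinEquiv.symm).mpr hCpsd)
    (by
      rw [← submatrix_sub']
      exact (Matrix.posSemidef_submatrix_equiv finSumFinEquiv.symm).mpr hBCpsd)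
    (isMatFun_submatrix _ hBfun) (isMatFun_submatrix _ hCfun)
  rw [← submatrix_sub'] at hmain
  have hsum : (fB - fC).PosSemidef :=
    (Matrix.posSemidef_submatrix_equiv finSumFinEquiv.symm).mp hmain
  have hblocks : fB - fC
      = Matrix.fromBlocks (GT - P*F*P) (0 - P*F*Q) (0 - Q*F*P) (GT₂ - Q*F*Q) := by
    rw [hfBdef, hfCdef, fromBlocks_sub]
  rw [hblocks] at hsum
  exact psd_topleft hsum




lemma conj3_sym {m : Type*} [Fintype m] {P F : Matrix m m ℝ} (hP : Pᵀ = P) (hF : Fᵀ = F) :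
    (P * F * P)ᵀ = P * F * P := by
  rw [Matrix.transpose_mul, Matrix.transpose_mul, hP, hF, ← mul_assoc]

lemma proj_trace {m : Type*} [Fintype m] {P F : Matrix m m ℝ} (hPP : P * P = P) :
    (F * (P*F*P)).trace = ((P*F*P)*(P*F*P)).trace := by
  have e1 : (P*F*P)*(P*F*P) = P*(F*(P*F*P)) := by
    calc (P*F*P)*(P*F*P) = P*(F*((P*P)*(F*P))) := by simp only [mul_assoc]
      _ = P*(F*(P*F*P)) := by rw [hPP]; simp only [mul_assoc]
  have e2 : (F*(P*F*P))*P = F*(P*F*P) := by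
    calc (F*(P*F*P))*P = F*(P*(F*(P*P))) := by simp only [mul_assoc]
      _ = F*(P*F*P) := by rw [hPP]; simp only [mul_assoc]
  rw [e1, Matrix.trace_mul_comm P (F*(P*F*P)), e2]

lemma proj_trace2 {m : Type*} [Fintype m] {P F H : Matrix m m ℝ}
    (hPH : P * H = H) (hHP : H * P = H) :
    ((P*F*P) * H).trace = (F*H).trace := by
  have e1 : (P*F*P)*H = P*(F*H) := by
    calc (P*F*P)*H = P*(F*(P*H)) := by simp only [mul_assoc]
      _ = P*(F*H) := by rw [hPH]
  rw [e1, Matrix.trace_mul_comm P (F*H), mul_assoc, hHP]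

lemma le_of_forall_eps {a B M : ℝ} (hM : 0 ≤ M)
    (h : ∀ c : ℝ, 0 < c → c ≤ 1 → a ≤ B + c * M) : a ≤ B := by
  by_contra hcon
  push_neg at hcon
  have hab : 0 < a - B := by linarith
  set c := min 1 ((a - B)/(2*(M+1))) with hcdef
  have hc0 : 0 < c := lt_min one_pos (by positivity)
  have hc1 : c ≤ 1 := min_le_left _ _
  have h2 := h c hc0 hc1
  have hcM : c * M ≤ (a-B)/(2*(M+1)) * M :=
    mul_le_mul_of_nonneg_right (min_le_right _ _) hM
  have h3 : (a-B)/(2*(M+1)) * M < a - B := by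
    rw [div_mul_eq_mul_div, div_lt_iff₀ (by positivity : (0:ℝ) < 2*(M+1))]
    nlinarith
  linarith

/-- the funNyström error is sandwiched between the projection errors
onto `range(A^q Ω)` and `range(A^{q-1/2} Ω)`. -/
theorem funNystrom_error_sandwich {n k p : ℕ} (q : ℕ) (hq : 1 ≤ q)
    (hk1 : 1 ≤ k) (hkn : k < n)
    (U : Matrix (Fin n) (Fin n) ℝ) (hU : U * Uᵀ = 1) (hU' : Uᵀ * U = 1)
    (lam : Fin n → ℝ) (hlam : Antitone lam) (hlam0 : ∀ i, 0 ≤ lam i)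
    (hlamk : 0 < lam ⟨k - 1, by omega⟩)
    (f : ℝ → ℝ) (hf : OpMonotoneOn f) (hf0 : f 0 = 0)
    (hfpos : ∀ x : ℝ, 0 ≤ x → 0 ≤ f x)
    (A : Matrix (Fin n) (Fin n) ℝ) (hA : A = U * Matrix.diagonal lam * Uᵀ)
    (Ω : Matrix (Fin n) (Fin (k + p)) ℝ)
    (P : Matrix (Fin n) (Fin n) ℝ)
    (hP : IsProjOnto P (apow U lam ((q : ℝ) - 1/2) * Ω))
    (Ahat : Matrix (Fin n) (Fin n) ℝ)
    (hAhat : Ahat = apow U lam (1/2) * P * apow U lam (1/2))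
    (fA fAhat : Matrix (Fin n) (Fin n) ℝ)
    (hfA : IsMatFun f A fA) (hfAhat : IsMatFun f Ahat fAhat)
    (P' : Matrix (Fin n) (Fin n) ℝ)
    (hP' : IsProjOnto P' (apow U lam (q : ℝ) * Ω)) :
    frob (fA - P' * fA * P') ≤ frob (fA - fAhat) ∧
    frob (fA - fAhat) ≤ frob (fA - P * fA * P) := by
  classical
  obtain ⟨hPt, hPP, hPrange⟩ := hP
  obtain ⟨hP't, hP'P', hP'range⟩ := hP'
  obtain ⟨V, d, hVo, hVo', hAhatdec, hHdec⟩ := id hfAhat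
  set Z := apow U lam (1/2 : ℝ) with hZdef
  have hZsym : Zᵀ = Z := conj_sym U _
  have hapow_mul : ∀ r s : ℝ, r ≠ 0 → s ≠ 0 → r + s ≠ 0 →
      apow U lam r * apow U lam s = apow U lam (r+s) := by
    intro r s hr hs hrs
    rw [apow, apow, apow, conj_mul U hU', Matrix.diagonal_mul_diagonal]
    have h0 : (fun i => lam i ^ r * lam i ^ s) = fun i => lam i ^ (r+s) := by
      funext i
      rcases eq_or_lt_of_le (hlam0 i) with h0 | hpos
      · rw [← h0, Real.zero_rpow hr, Real.zero_rpow hrs, zero_mul]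
      · rw [← Real.rpow_add hpos]
    rw [h0]
  have hq1 : (1:ℝ) ≤ (q:ℝ) := by exact_mod_cast hq
  have hZZ : Z * Z = A := by
    rw [hZdef, hapow_mul (1/2) (1/2) (by norm_num) (by norm_num) (by norm_num)]
    have h1 : (1/2 : ℝ) + (1/2 : ℝ) = 1 := by norm_num
    rw [h1, hA, apow]
    have h2 : (fun i => lam i ^ (1:ℝ)) = lam := by
      funext i; exact Real.rpow_one _
    rw [h2]
  have hZq : Z * apow U lam ((q:ℝ) - 1/2) = apow U lam (q:ℝ) := by
    rw [hZdef, hapow_mul (1/2) ((q:ℝ) - 1/2) (by norm_num) (by nlinarith) (by nlinarith)]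
    congr 1
    ring
  have hAsym : Aᵀ = A := by rw [hA]; exact conj_sym U lam
  have hApsd : A.PosSemidef := by
    rw [hA]; exact psd_conj (Matrix.posSemidef_diagonal_iff.mpr hlam0) U
  have hAhatZ : Ahat = Z * P * Z := hAhat
  have hAhat_fact : (P*Z)ᵀ*(P*Z) = Ahat := by
    rw [Matrix.transpose_mul, hZsym, hPt, hAhatZ]
    calc (Z*P)*(P*Z) = Z*((P*P)*Z) := by simp only [mul_assoc]
      _ = Z*P*Z := by rw [hPP, ← mul_assoc]
  have hAhatpsd : Ahat.PosSemidef := hAhat_fact ▸ psd_tmul (P*Z)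
  have hQPze : (1 - P) * P = 0 := by rw [Matrix.sub_mul, hPP, one_mul, sub_self]
  have hQQe : (1 - P) * (1 - P) = 1 - P := by
    rw [Matrix.mul_sub, mul_one, hQPze, sub_zero]
  have hdiffpsd : (A - Ahat).PosSemidef := by
    have hfac : ((1-P)*Z)ᵀ*((1-P)*Z) = A - Ahat := by
      have h1mP : (1 - P)ᵀ = 1 - P := by
        rw [Matrix.transpose_sub, Matrix.transpose_one, hPt]
      rw [Matrix.transpose_mul, hZsym, h1mP]
      calc (Z*(1-P))*((1-P)*Z) = Z*(((1-P)*(1-P))*Z) := by simp only [mul_assoc]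
        _ = Z*((1-P)*Z) := by rw [hQQe]
        _ = Z*(1*Z) - Z*(P*Z) := by rw [Matrix.sub_mul, Matrix.mul_sub]
        _ = A - Ahat := by rw [one_mul, hZZ, hAhatZ, mul_assoc]
    exact hfac ▸ psd_tmul _
  have hE : (fA - fAhat).PosSemidef := hf n A Ahat fA fAhat hApsd hAhatpsd hdiffpsd hfA hfAhat
  have hFeq : fA = U * Matrix.diagonal (fun i => f (lam i)) * Uᵀ :=
    isMatFun_unique hfA ⟨U, lam, hU, hU', hA, rfl⟩
  have hFsym : fAᵀ = fA := by rw [hFeq]; exact conj_sym U _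
  have hFpsd : fA.PosSemidef := by
    rw [hFeq]
    exact psd_conj (Matrix.posSemidef_diagonal_iff.mpr (fun i => hfpos _ (hlam0 i))) U
  have hHsym : fAhatᵀ = fAhat := by rw [hHdec]; exact conj_sym V _
  have hd0 : ∀ i, 0 ≤ d i := diag_nonneg hVo' hAhatdec hAhatpsd
  have hHpsd : fAhat.PosSemidef := by
    rw [hHdec]
    exact psd_conj (Matrix.posSemidef_diagonal_iff.mpr (fun i => hfpos _ (hd0 i))) V
  constructor
  · -- LOWER BOUND
    have hcolumns : ∀ x, P' *ᵥ (Ahat *ᵥ x) = Ahat *ᵥ x := by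
      intro x
      have h1 : P *ᵥ (Z *ᵥ x) ∈ LinearMap.range P.mulVecLin :=
        ⟨Z *ᵥ x, by rw [Matrix.mulVecLin_apply]⟩
      rw [hPrange] at h1
      obtain ⟨w, hw⟩ := h1
      rw [Matrix.mulVecLin_apply] at hw
      have h2 : Ahat *ᵥ x = (apow U lam (q:ℝ) * Ω) *ᵥ w := by
        calc Ahat *ᵥ x = Z *ᵥ (P *ᵥ (Z *ᵥ x)) := by
              rw [hAhatZ, Matrix.mulVec_mulVec, Matrix.mulVec_mulVec]
          _ = Z *ᵥ ((apow U lam ((q:ℝ) - 1/2) * Ω) *ᵥ w) := by rw [hw]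
          _ = (Z * (apow U lam ((q:ℝ) - 1/2) * Ω)) *ᵥ w := by rw [Matrix.mulVec_mulVec]
          _ = (apow U lam (q:ℝ) * Ω) *ᵥ w := by rw [← Matrix.mul_assoc, hZq]
      have h3 : Ahat *ᵥ x ∈ LinearMap.range P'.mulVecLin := by
        rw [hP'range, h2]
        exact ⟨w, by rw [Matrix.mulVecLin_apply]⟩
      obtain ⟨u, hu⟩ := h3
      rw [Matrix.mulVecLin_apply] at hu
      rw [← hu, Matrix.mulVec_mulVec, hP'P']
    have hP'Ahat : P' * Ahat = Ahat := by
      ext i j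
      have h := congr_fun (hcolumns (Pi.single j 1)) i
      rw [Matrix.mulVec_mulVec] at h
      simpa [Matrix.mulVec_single] using h
    have h1 : P' * (V * Matrix.diagonal d) = V * Matrix.diagonal d := by
      have h0 : P' * (V * Matrix.diagonal d * Vᵀ) * V = V * Matrix.diagonal d * Vᵀ * V := by
        rw [← hAhatdec, hP'Ahat]
      calc P' * (V * Matrix.diagonal d)
          = P' * (V * Matrix.diagonal d * (Vᵀ * V)) := by rw [hVo', mul_one]
        _ = P' * (V * Matrix.diagonal d * Vᵀ) * V := by simp only [mul_assoc]
        _ = V * Matrix.diagonal d * Vᵀ * V := h0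
        _ = V * Matrix.diagonal d * (Vᵀ * V) := by simp only [mul_assoc]
        _ = V * Matrix.diagonal d := by rw [hVo', mul_one]
    have h2 : ∀ i j, (P' * V) i j * d j = V i j * d j := by
      intro i j
      have e1 := congr_fun (congr_fun h1 i) j
      rw [← mul_assoc, Matrix.mul_diagonal, Matrix.mul_diagonal] at e1
      exact e1
    have h3 : P' * (V * Matrix.diagonal (fun i => f (d i)))
        = V * Matrix.diagonal (fun i => f (d i)) := by
      ext i j
      rw [← mul_assoc, Matrix.mul_diagonal, Matrix.mul_diagonal]
      rcases eq_or_ne (d j) 0 with h0 | h0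
      · rw [h0, hf0, mul_zero, mul_zero]
      · have := mul_right_cancel₀ h0 (h2 i j)
        rw [this]
    have hP'H : P' * fAhat = fAhat := by
      rw [hHdec, ← mul_assoc, h3]
    have hHP' : fAhat * P' = fAhat := by
      have h4 := congrArg Matrix.transpose hP'H
      rw [Matrix.transpose_mul, hHsym, hP't] at h4
      exact h4
    have hSsym : (P' * fA * P')ᵀ = P' * fA * P' := conj3_sym hP't hFsym
    have t1 : ((P' * fA * P') * fAhat).trace = (fA * fAhat).trace := proj_trace2 hP'H hHP'
    have t2 : (fA * (P' * fA * P')).trace = ((P' * fA * P') * (P' * fA * P')).trace :=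
      proj_trace hP'P'
    have eFH := trace_sub_sq hFsym hHsym
    have eFS := trace_sub_sq hFsym hSsym
    have eSH := trace_sub_sq hSsym hHsym
    have tSH0 : 0 ≤ ((P' * fA * P' - fAhat)ᵀ * (P' * fA * P' - fAhat)).trace :=
      frobSq_nonneg _
    have t1' : (fA * fAhat).trace = ((P' * fA * P') * fAhat).trace := t1.symm
    apply frob_le_frob
    linarith [eFH, eFS, eSH, tSH0, t1, t2]
  · -- UPPER BOUND
    have hTsym : (P * fA * P)ᵀ = P * fA * P := conj3_sym hPt hFsym
    have hXsym : (P * A * P)ᵀ = P * A * P := conj3_sym hPt hAsym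
    obtain ⟨W, μ, hW, hW', hXW⟩ := real_spectral hXsym
    have hXpsd : (P * A * P).PosSemidef := by
      have := psd_conj hApsd P
      rwa [hPt] at this
    have hμ0 : ∀ i, 0 ≤ μ i := diag_nonneg hW' hXW hXpsd
    have hSSt : (P*Z) * (P*Z)ᵀ = P*A*P := by
      rw [Matrix.transpose_mul, hZsym, hPt]
      calc (P*Z)*(Z*P) = P*((Z*Z)*P) := by simp only [mul_assoc]
        _ = P*A*P := by rw [hZZ, ← mul_assoc]
    have hsum_shift : ∑ i, (f (μ i))^2 = ∑ i, (f (d i))^2 := by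
      refine sum_shift (g := fun x => (f x)^2) (by simp [hf0])
        hW hW' (hSSt.trans hXW) hVo hVo' (hAhat_fact.trans hAhatdec)
    have hHH : (fAhat * fAhat).trace = ∑ i, (f (d i))^2 := by
      rw [hHdec, conj_mul V hVo', Matrix.diagonal_mul_diagonal, trace_conj V _ hVo']
      refine Finset.sum_congr rfl fun i _ => ?_
      rw [pow_two]
    have hPFPpsd : (P * fA * P).PosSemidef := by
      have := psd_conj hFpsd P
      rwa [hPt] at this
    have hsums_nonneg : 0 ≤ ∑ i, f (μ i) :=
      Finset.sum_nonneg fun i _ => hfpos _ (hμ0 i)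
    have hM0 : (0:ℝ) ≤ 2 * (∑ i, f (μ i)) + n := by positivity
    have hkey : ∀ c : ℝ, 0 < c → c ≤ 1 →
        ((P*fA*P)*(P*fA*P)).trace ≤ (∑ i, (f (μ i))^2) + c * (2 * (∑ i, f (μ i)) + n) := by
      intro c hc hc1
      have hts : ∀ i : Fin n, ∃ tt : ℝ, 0 < tt ∧
          ∀ u : ℝ, 0 < u → u ≤ tt → f ((1+u) * μ i) ≤ f (μ i) + c := by
        intro i
        rcases eq_or_lt_of_le (hμ0 i) with h0 | hpos
        · refine ⟨1, one_pos, fun u hu hu1 => ?_⟩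
          rw [← h0, mul_zero, hf0]
          linarith
        · obtain ⟨y, hy1, hy2⟩ := right_cont hf hf0 hfpos hpos hc
          refine ⟨(y - μ i)/μ i, div_pos (by linarith) hpos, fun u hu hu1 => ?_⟩
          have h1u : (1+u) * μ i ≤ y := by
            rw [le_div_iff₀ hpos] at hu1
            nlinarith
          have hm := scalar_mono hf (by positivity) h1u
          linarith
      choose T hT using hts
      have hne : Nonempty (Fin n) := ⟨⟨0, by omega⟩⟩
      have hune : (Finset.univ : Finset (Fin n)).Nonempty := Finset.univ_nonempty
      set t := Finset.univ.inf' hune T with htdef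
      have ht0 : 0 < t := (Finset.lt_inf'_iff hune).mpr fun i _ => (hT i).1
      have htle : ∀ i, t ≤ T i := fun i => Finset.inf'_le _ (Finset.mem_univ i)
      have hdil := dilation hf hf0 hZsym hZZ.symm hPt hPP hfA rfl hW hW' hXW ht0
      have hGpsd : (W * diagonal (fun i => f ((1+t)*μ i)) * Wᵀ).PosSemidef :=
        psd_conj (Matrix.posSemidef_diagonal_iff.mpr
          (fun i => hfpos _ (mul_nonneg (by linarith) (hμ0 i)))) W
      have hmono := trace_sq_mono hPFPpsd hdil
      have hGG : ((W * diagonal (fun i => f ((1+t)*μ i)) * Wᵀ)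
          * (W * diagonal (fun i => f ((1+t)*μ i)) * Wᵀ)).trace
          = ∑ i, (f ((1+t)*μ i))^2 := by
        rw [conj_mul W hW', Matrix.diagonal_mul_diagonal, trace_conj W _ hW']
        refine Finset.sum_congr rfl fun i _ => ?_
        rw [pow_two]
      have hptwise : ∀ i, (f ((1+t)*μ i))^2 ≤ (f (μ i) + c)^2 := by
        intro i
        have h1 : f ((1+t)*μ i) ≤ f (μ i) + c := (hT i).2 t ht0 (htle i)
        have h2 : 0 ≤ f ((1+t)*μ i) := hfpos _ (mul_nonneg (by linarith) (hμ0 i))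
        exact pow_le_pow_left₀ h2 h1 2
      have hsum1 : ∑ i, (f ((1+t)*μ i))^2 ≤ ∑ i, (f (μ i) + c)^2 :=
        Finset.sum_le_sum fun i _ => hptwise i
      have hsum2 : ∑ i, (f (μ i) + c)^2
          ≤ (∑ i, (f (μ i))^2) + c * (2 * (∑ i, f (μ i)) + n) := by
        have expand : ∀ i : Fin n, (f (μ i) + c)^2 ≤ (f (μ i))^2 + c * (2 * f (μ i) + 1) := by
          intro i
          nlinarith [hfpos (μ i) (hμ0 i)]
        calc ∑ i, (f (μ i) + c)^2
            ≤ ∑ i, ((f (μ i))^2 + c * (2 * f (μ i) + 1)) :=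
              Finset.sum_le_sum fun i _ => expand i
          _ = (∑ i, (f (μ i))^2) + c * (2 * (∑ i, f (μ i)) + n) := by
              rw [Finset.sum_add_distrib]
              congr 1
              rw [← Finset.mul_sum]
              congr 1
              rw [Finset.sum_add_distrib, ← Finset.mul_sum, Finset.sum_const,
                Finset.card_univ, Fintype.card_fin, nsmul_eq_mul, mul_one]
      linarith [hmono, hGG, hsum1, hsum2]
    have hcore : ((P*fA*P)*(P*fA*P)).trace ≤ (fAhat * fAhat).trace := by
      rw [hHH, ← hsum_shift]
      exact le_of_forall_eps hM0 hkey
    have eFH := trace_sub_sq hFsym hHsym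
    have eFT := trace_sub_sq hFsym hTsym
    have tFT : (fA * (P * fA * P)).trace = ((P * fA * P) * (P * fA * P)).trace :=
      proj_trace hPP
    have hcross : 0 ≤ (fAhat * (fA - fAhat)).trace := psd_trace_mul_nonneg hHpsd hE
    have hcross' : (fAhat * (fA - fAhat)).trace
        = (fA * fAhat).trace - (fAhat * fAhat).trace := by
      rw [Matrix.mul_sub, Matrix.trace_sub, Matrix.trace_mul_comm fAhat fA]
    apply frob_le_frob
    linarith [eFH, eFT, tFT, hcross, hcross', hcore]


end FunNystrom
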